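/- Let f = χ_{[I]_{2θ}} * Φ_ξ and, for ζ > 0, define f̃(x) = (1/√(2π)) ∫_{−ζ}^{ζ} f̂(s) e^{−isx} ds. Then ‖f̃ − f‖_∞ ≤ 2√(2/π) (|I| + 4θ) (ξ/ζ) e^{−ζ²/(4ξ)}. -/

import Mathlib

/-!
Write `f = μ * Φ_ξ` with `μ` the Lebesgue measure on the thickened interval. By Fubini,
`f̂(s) = (2π)^{-1/2} μ̂(s) e^{-s²/(4ξ)}` with `μ̂` the characteristic function of `μ`, so
`|f̂(s)| ≤ (2π)^{-1/2} μ(ℝ) e^{-s²/(4ξ)}` and `μ(ℝ) = |I| + 4θ`. Fubini and the Gaussian integral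
once more give Fourier inversion for `f`, so `f̃ - f` is the inversion integral over `|s| > ζ`,
and the tail `∫_ζ^∞ e^{-s²/(4ξ)} ds ≤ ζ⁻¹ ∫_ζ^∞ s e^{-s²/(4ξ)} ds = (2ξ/ζ) e^{-ζ²/(4ξ)}` gives the
bound.
-/

open Real MeasureTheory Complex Set Filter

lemma setOf_infDist_Icc_le {a b r : ℝ} (hab : a ≤ b) (hr : 0 ≤ r) :
    {t : ℝ | Metric.infDist t (Icc a b) ≤ r} = Icc (a - r) (b + r) := by
  ext t
  simp only [mem_ofPred_eq, mem_Icc]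
  constructor
  · intro h
    obtain ⟨y, ⟨hay, hyb⟩, hyt⟩ :=
      isCompact_Icc.exists_infDist_eq_dist ⟨a, left_mem_Icc.2 hab⟩ t
    rw [hyt, Real.dist_eq, abs_le] at h
    constructor <;> linarith
  · rintro ⟨hat, htb⟩
    refine (Metric.infDist_le_dist_of_mem (projIcc a b hab t).2).trans ?_
    rw [Real.dist_eq, abs_le, coe_projIcc]
    constructor <;> simp only [max_def, min_def] <;> split_ifs <;> linarith

lemma integral_Ioi_mul_exp_neg_mul_sq {b : ℝ} (hb : 0 < b) (c : ℝ) :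
    ∫ s in Ioi c, s * rexp (-b * s ^ 2) = rexp (-b * c ^ 2) / (2 * b) := by
  have hderiv : ∀ s : ℝ, HasDerivAt (fun s ↦ -(2 * b)⁻¹ * rexp (-b * s ^ 2))
      (s * rexp (-b * s ^ 2)) s := by
    intro s
    refine (((hasDerivAt_pow 2 s).const_mul (-b)).exp.const_mul (-(2 * b)⁻¹)).congr_deriv ?_
    field_simp
    ring
  have hlim : Tendsto (fun s ↦ -(2 * b)⁻¹ * rexp (-b * s ^ 2)) atTop (nhds (-(2 * b)⁻¹ * 0)) :=
    (tendsto_exp_atBot.comp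
      ((tendsto_pow_atTop two_ne_zero).const_mul_atTop_of_neg (neg_lt_zero.2 hb))).const_mul _
  rw [integral_Ioi_of_hasDerivAt_of_tendsto' (fun s _ ↦ hderiv s)
    (integrable_mul_exp_neg_mul_sq hb).integrableOn hlim]
  field_simp
  ring

lemma integral_Ioi_exp_neg_mul_sq_le {b ζ : ℝ} (hb : 0 < b) (hζ : 0 < ζ) :
    ∫ s in Ioi ζ, rexp (-b * s ^ 2) ≤ rexp (-b * ζ ^ 2) / (2 * b * ζ) :=
  calc ∫ s in Ioi ζ, rexp (-b * s ^ 2)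
      ≤ ∫ s in Ioi ζ, ζ⁻¹ * (s * rexp (-b * s ^ 2)) := by
        refine setIntegral_mono_on (integrable_exp_neg_mul_sq hb).integrableOn
          ((integrable_mul_exp_neg_mul_sq hb).const_mul _).integrableOn measurableSet_Ioi
          fun s (hs : ζ < s) ↦ ?_
        rw [← mul_assoc]
        exact le_mul_of_one_le_left (exp_pos _).le ((one_le_inv_mul₀ hζ).2 hs.le)
    _ = rexp (-b * ζ ^ 2) / (2 * b * ζ) := by
        rw [integral_const_mul, integral_Ioi_mul_exp_neg_mul_sq hb]
        field_simp

lemma integral_compl_Icc_exp_neg_mul_sq_le {b ζ : ℝ} (hb : 0 < b) (hζ : 0 < ζ) :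
    ∫ s in (Icc (-ζ) ζ)ᶜ, rexp (-b * s ^ 2) ≤ rexp (-b * ζ ^ 2) / (b * ζ) := by
  have hsymm : ∫ s in Iio (-ζ), rexp (-b * s ^ 2) = ∫ s in Ioi ζ, rexp (-b * s ^ 2) := by
    rw [← integral_Iic_eq_integral_Iio, ← integral_comp_neg_Ioi]
    simp_rw [neg_sq]
  have hcompl : (Icc (-ζ) ζ)ᶜ = Iio (-ζ) ∪ Ioi ζ := by
    ext s
    simp only [mem_compl_iff, mem_Icc, mem_union, mem_Iio, mem_Ioi, not_and_or, not_le]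
  have hdisj : Disjoint (Iio (-ζ)) (Ioi ζ) :=
    (Iic_disjoint_Ioi (by linarith)).mono_left Iio_subset_Iic_self
  rw [hcompl, setIntegral_union hdisj measurableSet_Ioi
    (integrable_exp_neg_mul_sq hb).integrableOn (integrable_exp_neg_mul_sq hb).integrableOn, hsymm]
  calc _ ≤ 2 * (rexp (-b * ζ ^ 2) / (2 * b * ζ)) := by
        linarith [integral_Ioi_exp_neg_mul_sq_le hb hζ]
    _ = _ := by field_simp

lemma norm_setIntegral_Icc_sub_integral_le {H : ℝ → ℂ} {C b ζ : ℝ} (hb : 0 < b) (hζ : 0 < ζ)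
    (hH : AEStronglyMeasurable H) (hbound : ∀ s, ‖H s‖ ≤ C * rexp (-b * s ^ 2)) :
    ‖(∫ s in Icc (-ζ) ζ, H s) - ∫ s, H s‖ ≤ C * (rexp (-b * ζ ^ 2) / (b * ζ)) := by
  have hC : 0 ≤ C := by simpa using (norm_nonneg _).trans (hbound 0)
  have hG : Integrable fun s ↦ C * rexp (-b * s ^ 2) := (integrable_exp_neg_mul_sq hb).const_mul C
  rw [← integral_add_compl measurableSet_Icc (hG.mono' hH (ae_of_all _ hbound)),
    sub_add_cancel_left, norm_neg]
  calc ‖∫ s in (Icc (-ζ) ζ)ᶜ, H s‖ ≤ ∫ s in (Icc (-ζ) ζ)ᶜ, C * rexp (-b * s ^ 2) :=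
        norm_integral_le_of_norm_le hG.integrableOn (ae_of_all _ hbound)
    _ ≤ C * (rexp (-b * ζ ^ 2) / (b * ζ)) := by
        rw [integral_const_mul]
        exact mul_le_mul_of_nonneg_left (integral_compl_Icc_exp_neg_mul_sq_le hb hζ) hC

lemma fourierIntegral_gaussian_real {b : ℝ} (hb : 0 < b) (t : ℝ) :
    ∫ u : ℝ, cexp (I * t * u) * cexp (-b * u ^ 2) = √(π / b) * cexp (-t ^ 2 / (4 * b)) := by
  rw [fourierIntegral_gaussian (by simpa using hb), ← ofReal_div,
    show (1 / 2 : ℂ) = ((1 / 2 : ℝ) : ℂ) by norm_num, ← ofReal_cpow (by positivity),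
    Real.sqrt_eq_rpow]

lemma norm_cexp_neg_sq_div (ξ s : ℝ) :
    ‖cexp (-s ^ 2 / (4 * ξ))‖ = rexp (-(1 / (4 * ξ)) * s ^ 2) := by
  rw [norm_exp]
  congr 1
  norm_cast
  ring

lemma integrable_cexp_neg_sq_div {ξ : ℝ} (hξ : 0 < ξ) :
    Integrable fun s : ℝ ↦ cexp (-s ^ 2 / (4 * ξ)) :=
  (integrable_exp_neg_mul_sq (by positivity : 0 < 1 / (4 * ξ))).mono' (by fun_prop)
    (ae_of_all _ fun s ↦ (norm_cexp_neg_sq_div ξ s).le)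

/-- The kernel `Φ_ξ`. -/
noncomputable def gaussianKernel (ξ x : ℝ) : ℝ := √(ξ / π) * rexp (-ξ * x ^ 2)

lemma integrable_gaussianKernel {ξ : ℝ} (hξ : 0 < ξ) : Integrable (gaussianKernel ξ) :=
  (integrable_exp_neg_mul_sq hξ).const_mul _

lemma integral_gaussianKernel_mul_cexp {ξ : ℝ} (hξ : 0 < ξ) (s : ℝ) :
    ∫ u : ℝ, (gaussianKernel ξ u : ℂ) * cexp (I * s * u) = cexp (-s ^ 2 / (4 * ξ)) := by
  have hnorm : √(ξ / π) * √(π / ξ) = 1 := by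
    rw [← Real.sqrt_mul (by positivity), div_mul_div_cancel₀ (by positivity),
      div_self hξ.ne', Real.sqrt_one]
  have hintegrand : ∀ u : ℝ, (gaussianKernel ξ u : ℂ) * cexp (I * s * u)
      = √(ξ / π) * (cexp (I * s * u) * cexp (-ξ * u ^ 2)) := by
    intro u
    push_cast [gaussianKernel]
    ring
  simp_rw [hintegrand, integral_const_mul, fourierIntegral_gaussian_real hξ, ← mul_assoc,
    ← ofReal_mul, hnorm, ofReal_one, one_mul]

lemma integral_cexp_neg_sq_div_mul_cexp {ξ : ℝ} (hξ : 0 < ξ) (t : ℝ) :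
    ∫ s : ℝ, cexp (-s ^ 2 / (4 * ξ)) * cexp (I * s * t) = 2 * π * gaussianKernel ξ t := by
  have hsqrt : √(π / (1 / (4 * ξ))) = 2 * π * √(ξ / π) := by
    rw [show π / (1 / (4 * ξ)) = (2 * π) ^ 2 * (ξ / π) by field_simp; ring,
      Real.sqrt_mul (by positivity), Real.sqrt_sq (by positivity)]
  have hintegrand : ∀ s : ℝ, cexp (-s ^ 2 / (4 * ξ)) * cexp (I * s * t)
      = cexp (I * t * s) * cexp (-((1 / (4 * ξ) : ℝ) : ℂ) * s ^ 2) := by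
    intro s
    rw [mul_comm]
    congr 2 <;> push_cast <;> ring
  simp_rw [hintegrand, fourierIntegral_gaussian_real (by positivity : 0 < 1 / (4 * ξ)), hsqrt]
  push_cast [gaussianKernel]
  field_simp

noncomputable def unitaryFourier (g : ℝ → ℂ) (s : ℝ) : ℂ :=
  (√(2 * π) : ℂ)⁻¹ * ∫ x, g x * cexp (I * s * x)

noncomputable def truncatedFourierInv (ζ : ℝ) (ĝ : ℝ → ℂ) (x : ℝ) : ℂ :=
  (√(2 * π) : ℂ)⁻¹ * ∫ s in Icc (-ζ) ζ, ĝ s * cexp (-I * s * x)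

noncomputable def gaussianSmoothing (ξ : ℝ) (μ : Measure ℝ) (x : ℝ) : ℝ :=
  ∫ y, gaussianKernel ξ (x - y) ∂μ

lemma ofReal_gaussianSmoothing (ξ : ℝ) (μ : Measure ℝ) (x : ℝ) :
    (gaussianSmoothing ξ μ x : ℂ) = ∫ y, (gaussianKernel ξ (x - y) : ℂ) ∂μ :=
  integral_ofReal.symm

lemma norm_charFun_mul_cexp_mul_cexp_le (μ : Measure ℝ) (ξ s x : ℝ) :
    ‖charFun μ s * cexp (-s ^ 2 / (4 * ξ)) * cexp (-I * s * x)‖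
      ≤ μ.real univ * rexp (-(1 / (4 * ξ)) * s ^ 2) := by
  have hphase : ‖cexp (-I * s * x)‖ = 1 := by simp [norm_exp]
  rw [norm_mul, norm_mul, norm_cexp_neg_sq_div, hphase, mul_one]
  exact mul_le_mul_of_nonneg_right (norm_charFun_le s) (exp_pos _).le

section FiniteMeasure

variable {μ : Measure ℝ} [IsFiniteMeasure μ]

lemma integral_integral_sub_mul_cexp {g : ℝ → ℂ} (hg : Integrable g) (s : ℝ) :
    ∫ z, (∫ y, g (z - y) ∂μ) * cexp (I * s * z)
      = charFun μ s * ∫ u, g u * cexp (I * s * u) := by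
  set h : ℝ → ℂ := fun u ↦ g u * cexp (I * s * u)
  have hh : Integrable h := hg.mul_bdd (c := 1) (by fun_prop) (ae_of_all _ fun u ↦ by
    simp [norm_exp])
  have hphase : Integrable (fun y : ℝ ↦ cexp (s * y * I)) μ :=
    .of_bound (by fun_prop) 1 (ae_of_all _ fun y ↦ by rw [← ofReal_mul, norm_exp_ofReal_mul_I])
  have hsplit : ∀ z y : ℝ, g (z - y) * cexp (I * s * z) = cexp (s * y * I) * h (z - y) := by
    intro z y
    simp only [h]
    rw [mul_left_comm, ← Complex.exp_add]
    congr 2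
    push_cast
    ring
  calc ∫ z, (∫ y, g (z - y) ∂μ) * cexp (I * s * z)
      = ∫ z, ∫ y, cexp (s * y * I) * h (z - y) ∂μ := by
        simp_rw [← integral_mul_const, hsplit]
    _ = ∫ y, (∫ z, cexp (s * y * I) * h (z - y)) ∂μ :=
        integral_integral_swap (hphase.convolution_integrand (.mul ℂ ℂ) hh)
    _ = charFun μ s * ∫ u, h u := by
        simp_rw [integral_const_mul, integral_sub_right_eq_self, integral_mul_const,
          charFun_apply_real]

lemma integral_mul_charFun {g : ℝ → ℂ} (hg : Integrable g) :
    ∫ s, g s * charFun μ s = ∫ y, (∫ s, g s * cexp (s * y * I)) ∂μ := by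
  simp_rw [charFun_apply_real, ← integral_const_mul]
  have hphase : Continuous fun p : ℝ × ℝ ↦ cexp (p.1 * p.2 * I) := by fun_prop
  refine integral_integral_swap (f := fun s (y : ℝ) ↦ g s * cexp (s * y * I))
    ((hg.comp_fst μ).mul_bdd (c := 1) hphase.aestronglyMeasurable (ae_of_all _ fun p ↦ ?_))
  rw [← ofReal_mul, norm_exp_ofReal_mul_I]

variable {ξ : ℝ}

lemma unitaryFourier_gaussianSmoothing (hξ : 0 < ξ) (s : ℝ) :
    unitaryFourier (fun z ↦ (gaussianSmoothing ξ μ z : ℂ)) s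
      = (√(2 * π) : ℂ)⁻¹ * (charFun μ s * cexp (-s ^ 2 / (4 * ξ))) := by
  simp_rw [unitaryFourier, ofReal_gaussianSmoothing]
  rw [integral_integral_sub_mul_cexp (g := fun u ↦ (gaussianKernel ξ u : ℂ))
      (integrable_gaussianKernel hξ).ofReal, integral_gaussianKernel_mul_cexp hξ]

lemma gaussianSmoothing_eq_integral_charFun (hξ : 0 < ξ) (x : ℝ) :
    (gaussianSmoothing ξ μ x : ℂ)
      = (2 * π : ℂ)⁻¹ * ∫ s, charFun μ s * cexp (-s ^ 2 / (4 * ξ)) * cexp (-I * s * x) := by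
  have hg : Integrable fun s : ℝ ↦ cexp (-s ^ 2 / (4 * ξ)) * cexp (-I * s * x) :=
    (integrable_cexp_neg_sq_div hξ).mul_bdd (c := 1) (by fun_prop) (ae_of_all _ fun s ↦ by
      simp [norm_exp])
  have hphase : ∀ s y : ℝ, cexp (-I * s * x) * cexp (s * y * I) = cexp (I * s * ↑(y - x)) := by
    intro s y
    rw [← Complex.exp_add]
    push_cast
    ring_nf
  have hinv : ∫ s, charFun μ s * cexp (-s ^ 2 / (4 * ξ)) * cexp (-I * s * x)
      = 2 * π * (gaussianSmoothing ξ μ x : ℂ) :=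
    calc ∫ s, charFun μ s * cexp (-s ^ 2 / (4 * ξ)) * cexp (-I * s * x)
        = ∫ s : ℝ, cexp (-s ^ 2 / (4 * ξ)) * cexp (-I * s * x) * charFun μ s := by
          congr 1 with s
          ring
      _ = ∫ y, (∫ s : ℝ, cexp (-s ^ 2 / (4 * ξ)) * cexp (I * s * ↑(y - x))) ∂μ := by
          rw [integral_mul_charFun hg]
          simp_rw [mul_assoc _ (cexp _), hphase]
      _ = ∫ y, 2 * π * (gaussianKernel ξ (x - y) : ℂ) ∂μ := by
          simp_rw [integral_cexp_neg_sq_div_mul_cexp hξ, gaussianKernel, ← neg_sub x, neg_sq]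
      _ = 2 * π * (gaussianSmoothing ξ μ x : ℂ) := by
          rw [integral_const_mul, ofReal_gaussianSmoothing]
  rw [hinv, ← mul_assoc, inv_mul_cancel₀ (by simp [pi_ne_zero]), one_mul]

theorem norm_truncatedFourierInv_gaussianSmoothing_sub_le (hξ : 0 < ξ) {ζ : ℝ} (hζ : 0 < ζ)
    (x : ℝ) :
    ‖truncatedFourierInv ζ (unitaryFourier fun z ↦ (gaussianSmoothing ξ μ z : ℂ)) x
        - gaussianSmoothing ξ μ x‖
      ≤ 2 / π * μ.real univ * (ξ / ζ) * rexp (-ζ ^ 2 / (4 * ξ)) := by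
  set H : ℝ → ℂ := fun s ↦ charFun μ s * cexp (-s ^ 2 / (4 * ξ)) * cexp (-I * s * x)
  have hsqrt : (√(2 * π) : ℂ)⁻¹ * (√(2 * π) : ℂ)⁻¹ = (2 * (π : ℂ))⁻¹ := by
    rw [← mul_inv, ← ofReal_mul, Real.mul_self_sqrt (by positivity)]
    push_cast
    rfl
  have htrunc : truncatedFourierInv ζ (unitaryFourier fun z ↦ (gaussianSmoothing ξ μ z : ℂ)) x
      = (2 * (π : ℂ))⁻¹ * ∫ s in Icc (-ζ) ζ, H s := by
    simp_rw [truncatedFourierInv, unitaryFourier_gaussianSmoothing hξ, mul_assoc,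
      integral_const_mul, ← mul_assoc, hsqrt]
    rfl
  have hHmeas : AEStronglyMeasurable H := by
    have := measurable_charFun (μ := μ)
    fun_prop
  calc _ = (2 * π)⁻¹ * ‖(∫ s in Icc (-ζ) ζ, H s) - ∫ s, H s‖ := by
        rw [htrunc, gaussianSmoothing_eq_integral_charFun hξ, ← mul_sub, norm_mul]
        congr 1
        simp [abs_of_pos pi_pos]
    _ ≤ (2 * π)⁻¹ * (μ.real univ * (rexp (-(1 / (4 * ξ)) * ζ ^ 2) / (1 / (4 * ξ) * ζ))) := by
        gcongr
        exact norm_setIntegral_Icc_sub_integral_le (by positivity) hζ hHmeas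
          fun s ↦ norm_charFun_mul_cexp_mul_cexp_le μ ξ s x
    _ = 2 / π * μ.real univ * (ξ / ζ) * rexp (-ζ ^ 2 / (4 * ξ)) := by
        field_simp
        ring

end FiniteMeasure

lemma two_div_pi_le_two_mul_sqrt_two_div_pi : 2 / π ≤ 2 * √(2 / π) := by
  have : 1 / π ≤ √(2 / π) := by
    rw [Real.le_sqrt (by positivity) (by positivity), div_pow, one_pow,
      div_le_div_iff₀ (by positivity) (by positivity)]
    nlinarith [pi_gt_three]
  calc 2 / π = 2 * (1 / π) := by ring
    _ ≤ 2 * √(2 / π) := by gcongr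

/-- With `f = χ_{[I]_{2θ}} * Φ_ξ`, Fourier transform `f̂`, and the truncated
inverse transform `f̃(x) = (1/√(2π)) ∫_{−ζ}^{ζ} f̂(s) e^{−isx} ds`, one has
`‖f̃ − f‖_∞ ≤ 2√(2/π)(|I| + 4θ)(ξ/ζ) e^{−ζ²/(4ξ)}`. -/
theorem stmt_6 (a b θ ξ ζ : ℝ) (hab : a ≤ b) (hθ : 0 < θ) (hξ : 0 < ξ) (hζ : 0 < ζ)
    (Φ : ℝ → ℝ) (hΦ : ∀ x, Φ x = Real.sqrt (ξ / π) * Real.exp (-ξ * x ^ 2))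
    (f : ℝ → ℝ)
    (hf : ∀ x, f x = ∫ y,
      Set.indicator {t : ℝ | Metric.infDist t (Set.Icc a b) ≤ 2 * θ} (fun _ => (1 : ℝ)) y
        * Φ (x - y))
    (fhat : ℝ → ℂ)
    (hfhat : ∀ s, fhat s =
      (Real.sqrt (2 * π) : ℂ)⁻¹ * ∫ x : ℝ, (f x : ℂ) * Complex.exp (Complex.I * s * x))
    (ftilde : ℝ → ℂ)
    (hftilde : ∀ x, ftilde x =
      (Real.sqrt (2 * π) : ℂ)⁻¹ *
        ∫ s in Set.Icc (-ζ) ζ, fhat s * Complex.exp (-Complex.I * s * x)) :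
    ∀ x : ℝ, ‖ftilde x - (f x : ℂ)‖
      ≤ 2 * Real.sqrt (2 / π) * ((b - a) + 4 * θ) * (ξ / ζ)
        * Real.exp (-ζ ^ 2 / (4 * ξ)) := by
  intro x
  obtain rfl : Φ = gaussianKernel ξ := funext hΦ
  set μ := volume.restrict (Icc (a - 2 * θ) (b + 2 * θ))
  have hμ : μ.real univ = b - a + 4 * θ := by
    rw [measureReal_restrict_apply_univ, Real.volume_real_Icc_of_le (by linarith)]
    ring
  obtain rfl : f = gaussianSmoothing ξ μ := funext fun z ↦ by
    rw [hf, setOf_infDist_Icc_le hab (by positivity : 0 ≤ 2 * θ)]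
    simp_rw [← indicator_mul_left _ (fun _ ↦ (1 : ℝ)) (fun y ↦ gaussianKernel ξ (z - y)), one_mul]
    rw [integral_indicator measurableSet_Icc, gaussianSmoothing]
  obtain rfl : ftilde = truncatedFourierInv ζ fhat := funext hftilde
  obtain rfl : fhat = unitaryFourier fun z ↦ (gaussianSmoothing ξ μ z : ℂ) := funext hfhat
  calc _ ≤ 2 / π * μ.real univ * (ξ / ζ) * rexp (-ζ ^ 2 / (4 * ξ)) :=
        norm_truncatedFourierInv_gaussianSmoothing_sub_le hξ hζ x
    _ ≤ _ := by
        rw [hμ]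
        gcongr
        exact two_div_pi_le_two_mul_sqrt_two_div_pi
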